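/- arXiv:nlin/0201052 — 3 statements merged into one kernel-verified Lean document; each statement's English description precedes it below -/
import Mathlib

section
/- Let υ : (0,∞) → (0,∞) be differentiable with υ'(x)·x / υ(x) → 0 as x → +∞. Then for any fixed c ∈ (0,1), υ(x)/υ(ξx) → 1 as x → +∞, uniformly in ξ ∈ [c,1]; i.e., for every ε > 0 there exists X such that for all x ≥ X and all ξ ∈ [c,1], |υ(x)/υ(ξx) − 1| < ε. -/
open Filter Real

set_option maxHeartbeats 1000000 in
theorem stmt_3 (υ : ℝ → ℝ)
    (hdiff : ∀ x > (0:ℝ), DifferentiableAt ℝ υ x)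
    (hpos : ∀ x > (0:ℝ), 0 < υ x)
    (hH3 : Tendsto (fun x => deriv υ x * x / υ x) atTop (nhds 0))
    (c : ℝ) (hc : c ∈ Set.Ioo (0:ℝ) 1) :
    ∀ ε > (0:ℝ), ∃ X : ℝ, ∀ x ≥ X, ∀ ξ ∈ Set.Icc c 1,
      |υ x / υ (ξ * x) - 1| < ε := by
  obtain ⟨hc0, hc1⟩ := hc
  intro ε hε
  obtain ⟨η, hηdef⟩ : ∃ η, η = Real.log (1 + ε) := ⟨_, rfl⟩
  have hη0 : 0 < η := hηdef ▸ Real.log_pos (by linarith)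
  obtain ⟨δ, hδdef⟩ : ∃ δ, δ = η * c := ⟨_, rfl⟩
  have hδ0 : 0 < δ := hδdef ▸ mul_pos hη0 hc0
  have hev : ∀ᶠ t in atTop, |deriv υ t * t / υ t| < δ := by
    have h := hH3.eventually (Metric.ball_mem_nhds (0:ℝ) hδ0)
    filter_upwards [h] with t ht
    simpa only [Metric.mem_ball, Real.dist_eq, sub_zero] using ht
  obtain ⟨X0, hX0⟩ := eventually_atTop.mp hev
  obtain ⟨M, hMdef⟩ : ∃ M, M = max X0 1 := ⟨_, rfl⟩
  have hM1 : (1:ℝ) ≤ M := hMdef ▸ le_max_right _ _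
  have hM0 : X0 ≤ M := hMdef ▸ le_max_left _ _
  refine ⟨M / c, fun x hx ξ hξ => ?_⟩
  obtain ⟨hξc, hξ1⟩ := hξ
  have hcx : M ≤ c * x := by
    rw [ge_iff_le, div_le_iff₀ hc0] at hx
    linarith [hx]
  have hx0 : 0 < x := by nlinarith
  have ha0 : 0 < ξ * x := mul_pos (lt_of_lt_of_le hc0 hξc) hx0
  have haM : M ≤ ξ * x := le_trans hcx (by nlinarith)
  have hbM : M ≤ x := le_trans haM (by nlinarith)
  rcases eq_or_lt_of_le hξ1 with h1 | h1
  · subst h1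
    rw [one_mul, div_self (ne_of_gt (hpos x hx0))]
    simpa using hε
  · -- ξ < 1, apply MVT to log ∘ υ on [ξ*x, x]
    have hab : ξ * x < x := by nlinarith
    have hposIcc : ∀ t ∈ Set.Icc (ξ * x) x, 0 < t := fun t ht => lt_of_lt_of_le ha0 ht.1
    have hderiv : ∀ t ∈ Set.Ioo (ξ * x) x,
        HasDerivAt (fun t => Real.log (υ t)) (deriv υ t / υ t) t := by
      intro t ht
      have ht0 : 0 < t := lt_trans ha0 ht.1
      exact ((hdiff t ht0).hasDerivAt).log (ne_of_gt (hpos t ht0))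
    have hcont : ContinuousOn (fun t => Real.log (υ t)) (Set.Icc (ξ * x) x) := by
      intro t ht
      have ht0 : 0 < t := hposIcc t ht
      exact (((hdiff t ht0).hasDerivAt).log (ne_of_gt (hpos t ht0))).continuousAt.continuousWithinAt
    obtain ⟨θ, hθ, heq⟩ := exists_hasDerivAt_eq_slope (fun t => Real.log (υ t))
      (fun t => deriv υ t / υ t) hab hcont hderiv
    have hθ0 : 0 < θ := lt_trans ha0 hθ.1
    have hθM : X0 ≤ θ := le_trans hM0 (le_trans haM (le_of_lt hθ.1))
    have hbound : |deriv υ θ * θ / υ θ| < δ := hX0 θ hθM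
    have hua : 0 < υ (ξ * x) := hpos _ ha0
    have hub : 0 < υ x := hpos _ hx0
    have hlogratio : Real.log (υ x / υ (ξ * x)) =
        (deriv υ θ / υ θ) * (x - ξ * x) := by
      rw [Real.log_div (ne_of_gt hub) (ne_of_gt hua), heq]
      exact (div_mul_cancel₀ _ (ne_of_gt (sub_pos.mpr hab))).symm
    have key : |Real.log (υ x / υ (ξ * x))| < η := by
      rw [hlogratio]
      have h1 : deriv υ θ / υ θ = (deriv υ θ * θ / υ θ) / θ := by
        field_simp
      rw [h1, abs_mul, abs_div, abs_of_pos hθ0, abs_of_pos (by linarith : (0:ℝ) < x - ξ * x)]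
      have hfrac : (x - ξ * x) / θ ≤ (1 - c) / c := by
        rw [div_le_div_iff₀ hθ0 hc0]
        have hθa : ξ * x ≤ θ := le_of_lt hθ.1
        have : c * x ≤ θ := le_trans (by nlinarith) hθa
        nlinarith
      calc |deriv υ θ * θ / υ θ| / θ * (x - ξ * x)
          = |deriv υ θ * θ / υ θ| * ((x - ξ * x) / θ) := by ring
        _ ≤ δ * ((1 - c) / c) := by
            apply mul_le_mul (le_of_lt hbound) hfrac
            · exact div_nonneg (by linarith) (le_of_lt hθ0)
            · exact le_of_lt hδ0
        _ = η * (1 - c) := by rw [hδdef]; field_simp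
        _ < η := by nlinarith
    -- convert log bound to ratio bound
    have hr0 : 0 < υ x / υ (ξ * x) := div_pos hub hua
    have hexpη : Real.exp η = 1 + ε := by
      rw [hηdef]; exact Real.exp_log (by linarith)
    rw [abs_lt] at key
    have hup : υ x / υ (ξ * x) < 1 + ε := by
      calc υ x / υ (ξ * x) = Real.exp (Real.log (υ x / υ (ξ * x))) :=
            (Real.exp_log hr0).symm
        _ < Real.exp η := Real.exp_lt_exp.mpr key.2
        _ = 1 + ε := hexpη
    have hlo : (1 + ε)⁻¹ < υ x / υ (ξ * x) := by
      calc (1 + ε)⁻¹ = Real.exp (-η) := by rw [Real.exp_neg, hexpη]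
        _ < Real.exp (Real.log (υ x / υ (ξ * x))) :=
            Real.exp_lt_exp.mpr (by linarith [key.1])
        _ = υ x / υ (ξ * x) := Real.exp_log hr0
    rw [abs_lt]
    constructor
    · have h1e : (0:ℝ) < 1 + ε := by linarith
      have hinv : (1 + ε)⁻¹ * (1 + ε) = 1 := inv_mul_cancel₀ (ne_of_gt h1e)
      nlinarith [hlo]
    · linarith
end

section
/- Let f(x) = υ(x)·x^{-p} satisfy (H1)-(H3) with p > 0. Then there exists θ > 0 (indeed any θ > (p+1)/p works) such that f(x)^θ / |f'(x)| → 0 as x → +∞; in particular |f'(x)| ≫ f(x)^θ (assumption (A5)). -/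
/-!
Write `G x = x υ'(x) / υ(x)`, so that `f' = υ x^(-p-1) (G - p)`. With
`ε = (pθ - p - 1)/(θ - 1)`, positive exactly when `θ > (p+1)/p`, the powers of `x` balance and
`f^θ / |f'| = (υ x^(-ε))^(θ-1) / |G - p|`. By (H2) the numerator tends to `0`, and by (H3) with
`i = 1` the denominator tends to `p > 0`.
-/

open Filter Real Topology

lemma hasDerivAt_of_eq_mul_rpow_neg {f u : ℝ → ℝ} {u' x p : ℝ} (hx : 0 < x)
    (hf : ∀ y > 0, f y = u y * y ^ (-p)) (hu : HasDerivAt u u' x) (hux : u x ≠ 0) :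
    HasDerivAt f (u x * x ^ (-p - 1) * (u' * x / u x - p)) x := by
  have hpow : HasDerivAt (fun y : ℝ => y ^ (-p)) (-p * x ^ (-p - 1)) x :=
    hasDerivAt_rpow_const (Or.inl hx.ne')
  have hprod := (hu.mul hpow).congr_of_eventuallyEq
    (eventually_of_mem (Ioi_mem_nhds hx) hf)
  refine hprod.congr_deriv ?_
  rw [show x ^ (-p) = x ^ (-p - 1) * x by rw [← rpow_add_one hx.ne']; ring_nf]
  field_simp
  ring

lemma mul_rpow_neg_rpow_div_eq {v x p θ ε : ℝ} (hv : 0 < v) (hx : 0 < x)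
    (hε : ε * (θ - 1) = p * θ - p - 1) (c : ℝ) :
    (v * x ^ (-p)) ^ θ / (v * x ^ (-p - 1) * c) = (v * x ^ (-ε)) ^ (θ - 1) / c := by
  have hv_pow : v ^ θ = v ^ (θ - 1) * v := by rw [← rpow_add_one hv.ne']; ring_nf
  have hx_pow : x ^ (-p * θ) = x ^ (-ε * (θ - 1)) * x ^ (-p - 1) := by
    rw [← rpow_add hx]; congr 1; linarith
  rw [mul_rpow hv.le (rpow_nonneg hx.le _), mul_rpow hv.le (rpow_nonneg hx.le _),
    ← rpow_mul hx.le, ← rpow_mul hx.le, hv_pow, hx_pow]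
  have hvθ : 0 < v ^ (θ - 1) := rpow_pos_of_pos hv _
  have hxp : 0 < x ^ (-p - 1) := rpow_pos_of_pos hx _
  rcases eq_or_ne c 0 with rfl | hc
  · simp
  · field_simp

theorem stmt_13 (f υ : ℝ → ℝ) (p : ℝ) (hp : 0 < p)
    (hC : ContDiff ℝ 3 υ) (hpos : ∀ x ≥ (0:ℝ), 0 < υ x)
    (hH1 : ∀ x > (0:ℝ), f x = υ x * x ^ (-p))
    (hH2 : ∀ ε > (0:ℝ), Tendsto (fun x => υ x * x ^ (-ε)) atTop (nhds 0))
    (hH3 : ∀ i ∈ ({1, 2, 3} : Set ℕ),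
      Tendsto (fun x => iteratedDeriv i υ x * x ^ (i : ℕ) / υ x) atTop (nhds 0)) :
    ∀ θ : ℝ, (p + 1) / p < θ →
      Tendsto (fun x => f x ^ θ / |deriv f x|) atTop (nhds 0) := by
  intro θ hθ
  have hpθ : p + 1 < p * θ := by rwa [div_lt_iff₀ hp, mul_comm] at hθ
  have hθ1 : 0 < θ - 1 := by nlinarith
  set ε := (p * θ - p - 1) / (θ - 1)
  have hε : 0 < ε := div_pos (by linarith) hθ1
  have hεθ : ε * (θ - 1) = p * θ - p - 1 := div_mul_cancel₀ _ hθ1.ne'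
  have hG : Tendsto (fun x => deriv υ x * x / υ x) atTop (𝓝 0) := by
    simpa using hH3 1 (by simp)
  have hnum : Tendsto (fun x => (υ x * x ^ (-ε)) ^ (θ - 1)) atTop (𝓝 0) := by
    simpa [zero_rpow hθ1.ne'] using (hH2 ε hε).rpow_const (Or.inr hθ1.le)
  have hden : Tendsto (fun x => |deriv υ x * x / υ x - p|) atTop (𝓝 p) := by
    simpa [abs_of_pos hp] using (hG.sub_const p).abs
  refine (zero_div p ▸ hnum.div hden hp.ne').congr' ?_
  filter_upwards [eventually_gt_atTop 0] with x hx
  have hυx := hpos x hx.le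
  have hf' := hasDerivAt_of_eq_mul_rpow_neg hx hH1
    ((hC.differentiable (by norm_num) x).hasDerivAt) hυx.ne'
  rw [Pi.div_apply, hH1 x hx, hf'.deriv, abs_mul, abs_of_pos (by positivity : 0 < υ x * x ^ (-p - 1)),
    mul_rpow_neg_rpow_div_eq hυx hx hεθ]
end

section
/- Let p > 0 and let (ξ_n)_{n≥0} be an increasing sequence of positive reals with ξ_0 = 1 satisfying the recursion (ξ_{n+1}^{-p} + ξ_n^{-p}) / (ξ_{n+1} − ξ_n) = p·[K + 1 + 2·Σ_{i=1}^n ξ_i^{-p-1}] for all n ≥ 0, where K > 0 is a fixed constant. Then ξ_n → +∞ as n → +∞. -/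
/-!
If `ξ` stayed bounded by `b`, the recursion would force steps
`ξ (n + 1) - ξ n ≥ 2 b ^ (-p) / (p (K + 3) (n + 1))`: the numerator is at least `2 b ^ (-p)`,
while the sum on the right has `n` terms, each at most `1` because `ξ ≥ 1`. The harmonic series
diverges, so these steps add up to infinity, contradicting boundedness.
-/

open Filter Real

theorem tendsto_atTop_of_div_succ_le_sub {u : ℕ → ℝ} {c : ℝ} (hc : 0 < c)
    (h : ∀ n : ℕ, c / (n + 1) ≤ u (n + 1) - u n) : Tendsto u atTop atTop := by
  have hsum : ∀ N, u 0 + c * ∑ i ∈ Finset.range N, (1 / ((i : ℝ) + 1)) ≤ u N := by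
    intro N
    have := Finset.sum_le_sum fun i (_ : i ∈ Finset.range N) => h i
    simp only [Finset.sum_range_sub u N, div_eq_mul_one_div c, ← Finset.mul_sum] at this
    linarith
  exact tendsto_atTop_mono hsum <| tendsto_atTop_add_const_left _ _ <|
    tendsto_sum_range_one_div_nat_succ_atTop.const_mul_atTop hc

section Recursion

variable {p K : ℝ} {ξ : ℕ → ℝ}

theorem rec_rhs_pos (hmono : StrictMono ξ) (hone : ∀ n, 1 ≤ ξ n)
    (hrec : ∀ n : ℕ, (ξ (n + 1) ^ (-p) + ξ n ^ (-p)) / (ξ (n + 1) - ξ n) =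
      p * (K + 1 + 2 * ∑ i ∈ Finset.Icc 1 n, ξ i ^ (-p - 1))) (n : ℕ) :
    0 < p * (K + 1 + 2 * ∑ i ∈ Finset.Icc 1 n, ξ i ^ (-p - 1)) := by
  rw [← hrec n]
  have hξ : ∀ m, 0 < ξ m ^ (-p) := fun m => rpow_pos_of_pos (by linarith [hone m]) _
  exact div_pos (add_pos (hξ _) (hξ _)) (sub_pos.2 (hmono n.lt_succ_self))

theorem sum_rpow_le_of_one_le (hp : -1 ≤ p) (hone : ∀ n, 1 ≤ ξ n) (n : ℕ) :
    ∑ i ∈ Finset.Icc 1 n, ξ i ^ (-p - 1) ≤ n := by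
  calc ∑ i ∈ Finset.Icc 1 n, ξ i ^ (-p - 1) ≤ ∑ i ∈ Finset.Icc 1 n, (1 : ℝ) :=
        Finset.sum_le_sum fun i _ => rpow_le_one_of_one_le_of_nonpos (hone i) (by linarith)
    _ = n := by simp

theorem exists_div_succ_le_sub_of_bounded (hp : 0 < p) (hmono : StrictMono ξ)
    (hone : ∀ n, 1 ≤ ξ n)
    (hrec : ∀ n : ℕ, (ξ (n + 1) ^ (-p) + ξ n ^ (-p)) / (ξ (n + 1) - ξ n) =
      p * (K + 1 + 2 * ∑ i ∈ Finset.Icc 1 n, ξ i ^ (-p - 1))) {b : ℝ} (hb : ∀ n, ξ n ≤ b) :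
    ∃ c > 0, ∀ n : ℕ, c / (n + 1) ≤ ξ (n + 1) - ξ n := by
  -- the recursion at `n = 0` has an empty sum
  have hK : 0 < p * (K + 1) := by simpa using rec_rhs_pos hmono hone hrec 0
  have hbp : 0 < b ^ (-p) := rpow_pos_of_pos (by linarith [hone 0, hb 0]) _
  refine ⟨2 * b ^ (-p) / (p * (K + 3)), div_pos (by positivity) (by linarith), fun n => ?_⟩
  set R := p * (K + 1 + 2 * ∑ i ∈ Finset.Icc 1 n, ξ i ^ (-p - 1)) with hR_def
  have hR : 0 < R := rec_rhs_pos hmono hone hrec n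
  have hRle : R ≤ p * (K + 3) * (n + 1) := by
    have hS := sum_rpow_le_of_one_le (by linarith : -1 ≤ p) hone n
    have hn : (0 : ℝ) ≤ n := n.cast_nonneg
    nlinarith [mul_nonneg hK.le hn]
  have hnum : 2 * b ^ (-p) ≤ ξ (n + 1) ^ (-p) + ξ n ^ (-p) := by
    have hle : ∀ m, b ^ (-p) ≤ ξ m ^ (-p) := fun m =>
      rpow_le_rpow_of_nonpos (by linarith [hone m]) (hb m) (by linarith)
    linarith [hle n, hle (n + 1)]
  have hnum_pos : 0 < ξ (n + 1) ^ (-p) + ξ n ^ (-p) := by linarith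
  calc 2 * b ^ (-p) / (p * (K + 3)) / (n + 1) = 2 * b ^ (-p) / (p * (K + 3) * (n + 1)) :=
        div_div _ _ _
    _ ≤ (ξ (n + 1) ^ (-p) + ξ n ^ (-p)) / R := div_le_div₀ hnum_pos.le hnum hR hRle
    _ = ξ (n + 1) - ξ n := by rw [hR_def, ← hrec n, div_div_cancel₀ hnum_pos.ne']

end Recursion

theorem stmt_18_general (p K : ℝ) (hp : 0 < p)
    (ξ : ℕ → ℝ) (hmono : StrictMono ξ) (h0 : ξ 0 = 1)
    (hrec : ∀ n : ℕ,
      (ξ (n + 1) ^ (-p) + ξ n ^ (-p)) / (ξ (n + 1) - ξ n) =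
        p * (K + 1 + 2 * ∑ i ∈ Finset.Icc 1 n, ξ i ^ (-p - 1))) :
    Tendsto ξ atTop atTop := by
  have hone : ∀ n, 1 ≤ ξ n := fun n => h0 ▸ hmono.monotone n.zero_le
  refine tendsto_atTop_atTop_of_monotone hmono.monotone fun b => ?_
  by_contra! hb
  obtain ⟨c, hc, hstep⟩ :=
    exists_div_succ_le_sub_of_bounded hp hmono hone hrec fun n => (hb n).le
  obtain ⟨n, hn⟩ := ((tendsto_atTop_of_div_succ_le_sub hc hstep).eventually_ge_atTop b).exists
  exact (hb n).not_ge hn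

theorem stmt_18 (p K : ℝ) (hp : 0 < p) (hK : 0 < K)
    (ξ : ℕ → ℝ) (hmono : StrictMono ξ) (h0 : ξ 0 = 1)
    (hpos : ∀ n, 0 < ξ n)
    (hrec : ∀ n : ℕ,
      (ξ (n + 1) ^ (-p) + ξ n ^ (-p)) / (ξ (n + 1) - ξ n) =
        p * (K + 1 + 2 * ∑ i ∈ Finset.Icc 1 n, ξ i ^ (-p - 1))) :
    Tendsto ξ atTop atTop :=
  stmt_18_general p K hp ξ hmono h0 hrec
end
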